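/- arXiv:1712.06723 — 3 statements merged into one kernel-verified Lean document; each statement's English description precedes it below -/
import Mathlib

section
/- Suppose the budget b satisfies: min over all selections x of C(x) is at most b, and every selection x_p attaining the maximum profit P_max = max_x P(x) has cost C(x_p) > b (condition (7) of the paper). If x* is a Pareto efficient selection (for maximizing P and minimizing C) which is feasible, i.e. C(x*) ≤ b, and which minimizes the slack b − C(x) over all feasible Pareto efficient selections x (equivalently, C(x*) ≥ C(x) for every Pareto efficient x with C(x) ≤ b), then x* solves (MCKP): P(x*) ≥ P(y) for every selection y with C(y) ≤ b. -/
/-- Under condition (7) (minimal cost ≤ b, and every profit-maximizing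
selection has cost > b), a feasible Pareto efficient selection minimizing the slack
b − C(x) among feasible Pareto efficient selections solves (MCKP). -/
theorem stmt_0 (k : ℕ) (n : Fin k → ℕ) (hn : ∀ i, 0 < n i)
    (p c : ∀ i : Fin k, Fin (n i) → ℝ)
    (hp : ∀ i j, 0 ≤ p i j) (hc : ∀ i j, 0 ≤ c i j)
    (b : ℝ) (hb : 0 ≤ b)
    (P C : (∀ i : Fin k, Fin (n i)) → ℝ)
    (hP : ∀ x, P x = ∑ i, p i (x i))
    (hC : ∀ x, C x = ∑ i, c i (x i))
    (Cmin Pmax : ℝ)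
    (hCmin : IsLeast (Set.range C) Cmin)
    (hPmax : IsGreatest (Set.range P) Pmax)
    (hCminb : Cmin ≤ b)
    (hcond7 : ∀ xp, P xp = Pmax → b < C xp)
    (Pareto : (∀ i : Fin k, Fin (n i)) → Prop)
    (hPareto : ∀ x, Pareto x ↔
      ¬ ∃ y, P x ≤ P y ∧ C y ≤ C x ∧ (P y, C y) ≠ (P x, C x))
    (xstar : ∀ i : Fin k, Fin (n i))
    (hxstarPareto : Pareto xstar) (hxstarFeas : C xstar ≤ b)
    (hxstarMin : ∀ x, Pareto x → C x ≤ b → C x ≤ C xstar) :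
    ∀ y, C y ≤ b → P y ≤ P xstar := by
  classical
  intro y hy
  by_contra hlt
  push_neg at hlt
  haveI : ∀ i, Nonempty (Fin (n i)) := fun i => ⟨⟨0, hn i⟩⟩
  set F : Finset (∀ i, Fin (n i)) := Finset.univ.filter (fun z => C z ≤ b) with hF
  have hyF : y ∈ F := by simp [hF, hy]
  obtain ⟨z0, hz0F, hz0max⟩ := F.exists_max_image P ⟨y, hyF⟩
  set G : Finset (∀ i, Fin (n i)) := F.filter (fun z => P z0 ≤ P z) with hG
  have hz0G : z0 ∈ G := by simp [hG, hz0F]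
  obtain ⟨z, hzG, hzmin⟩ := G.exists_min_image C ⟨z0, hz0G⟩
  have hzF : z ∈ F := (Finset.mem_filter.mp hzG).1
  have hzb : C z ≤ b := (Finset.mem_filter.mp hzF).2
  have hPz : P z0 ≤ P z := (Finset.mem_filter.mp hzG).2
  have hzPareto : Pareto z := by
    rw [hPareto]
    rintro ⟨w, hPw, hCw, hne⟩
    have hwF : w ∈ F := by
      simp only [hF, Finset.mem_filter, Finset.mem_univ, true_and]
      exact hCw.trans hzb
    have hPweq : P w = P z := le_antisymm ((hz0max w hwF).trans hPz) hPw
    have hwG : w ∈ G := by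
      simp only [hG, Finset.mem_filter]
      exact ⟨hwF, hPweq ▸ hPz⟩
    exact hne (by rw [hPweq, le_antisymm hCw (hzmin w hwG)])
  have hCz : C z ≤ C xstar := hxstarMin z hzPareto hzb
  rw [hPareto] at hxstarPareto
  have hPlt : P xstar < P z := lt_of_lt_of_le hlt ((hz0max y hyF).trans hPz)
  exact hxstarPareto ⟨z, hPlt.le, hCz, by
    intro h
    exact absurd (Prod.mk.injEq _ _ _ _ ▸ h).1 hPlt.ne'⟩
end

section
/- Let F₁ := max over selections x of P(x), and let x̄₁ be a selection with P(x̄₁) = F₁ whose cost C(x̄₁) is minimal among all selections attaining profit F₁; set F̄₂ := −C(x̄₁) and F₂ := max over selections x of (−C(x)). Assume F₂ > F̄₂, and assume d > 0 is such that every selection x with P(x) < F₁ satisfies P(x) ≤ F₁ − d (d represents the smallest nonzero decrease of P from F₁). Define ε₁ := d / (F₂ − F̄₂). Then ε₁ > 0, the selection x̄₁ maximizes P(x) − ε₁·C(x) over all selections, and consequently x̄₁ is Pareto efficient (for maximizing P and minimizing C) and attains the maximum profit F₁. -/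
/-- with ε₁ = d/(F₂ − F̄₂), the profit-maximal selection of minimal
cost maximizes P − ε₁·C, hence is Pareto efficient and attains maximal profit. -/
theorem stmt_5 (k : ℕ) (n : Fin k → ℕ) (hn : ∀ i, 0 < n i)
    (p c : ∀ i : Fin k, Fin (n i) → ℝ)
    (hp : ∀ i j, 0 ≤ p i j) (hc : ∀ i j, 0 ≤ c i j)
    (P C : (∀ i : Fin k, Fin (n i)) → ℝ)
    (hP : ∀ x, P x = ∑ i, p i (x i))
    (hC : ∀ x, C x = ∑ i, c i (x i))
    (Pareto : (∀ i : Fin k, Fin (n i)) → Prop)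
    (hPareto : ∀ x, Pareto x ↔
      ¬ ∃ y, P x ≤ P y ∧ C y ≤ C x ∧ (P y, C y) ≠ (P x, C x))
    (F1 F2 Fbar2 : ℝ)
    (hF1 : IsGreatest (Set.range P) F1)
    (xbar1 : ∀ i : Fin k, Fin (n i))
    (hxbar1P : P xbar1 = F1)
    (hxbar1C : ∀ x, P x = F1 → C xbar1 ≤ C x)
    (hFbar2 : Fbar2 = -(C xbar1))
    (hF2 : IsGreatest (Set.range fun x => -(C x)) F2)
    (hF2gt : Fbar2 < F2)
    (d : ℝ) (hd : 0 < d)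
    (hdecr : ∀ x, P x < F1 → P x ≤ F1 - d)
    (eps1 : ℝ) (heps1 : eps1 = d / (F2 - Fbar2)) :
    0 < eps1 ∧
      (∀ x, P x - eps1 * C x ≤ P xbar1 - eps1 * C xbar1) ∧
      Pareto xbar1 ∧ P xbar1 = F1 := by
  have hsub : 0 < F2 - Fbar2 := sub_pos.2 hF2gt
  have heps : 0 < eps1 := heps1 ▸ div_pos hd hsub
  refine ⟨heps, ?_, ?_, hxbar1P⟩
  · intro x
    have hle : P x ≤ F1 := hF1.2 ⟨x, rfl⟩
    rcases eq_or_lt_of_le hle with heq | hlt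
    · have := hxbar1C x heq
      rw [heq, hxbar1P]
      nlinarith
    · have h1 : P x ≤ F1 - d := hdecr x hlt
      have h2 : -(C x) ≤ F2 := hF2.2 ⟨x, rfl⟩
      have h3 : eps1 * (F2 - Fbar2) = d := by
        rw [heps1]; field_simp
      rw [hxbar1P]
      nlinarith [hFbar2]
  · rw [hPareto]
    rintro ⟨y, h1, h2, h3⟩
    have hy : P y = F1 := le_antisymm (hF1.2 ⟨y, rfl⟩) (hxbar1P ▸ h1)
    have hc' : C y = C xbar1 := le_antisymm h2 (hxbar1C y hy)
    exact h3 (by rw [hy, hxbar1P, hc'])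
end

section
/- Let F₂ := max over selections x of (−C(x)) (so −F₂ is the minimal cost), and let x̄₂ be a selection with −C(x̄₂) = F₂ whose profit P(x̄₂) is maximal among all selections attaining cost −F₂; set F̄₁ := P(x̄₂) and F₁ := max over selections x of P(x). Assume F₁ > F̄₁, and assume d > 0 is such that every selection x with −C(x) < F₂ satisfies −C(x) ≤ F₂ − d (d represents the smallest nonzero decrease of −C from F₂). Define ε₂ := d / (F₁ − F̄₁). Then ε₂ > 0, the selection x̄₂ maximizes −C(x) + ε₂·P(x) over all selections, and consequently x̄₂ is Pareto efficient (for maximizing P and minimizing C) and attains the minimal cost. -/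
/-- with ε₂ = d/(F₁ − F̄₁), the cost-minimal selection of maximal
profit maximizes −C + ε₂·P, hence is Pareto efficient and attains minimal cost. -/
theorem stmt_6 (k : ℕ) (n : Fin k → ℕ) (hn : ∀ i, 0 < n i)
    (p c : ∀ i : Fin k, Fin (n i) → ℝ)
    (hp : ∀ i j, 0 ≤ p i j) (hc : ∀ i j, 0 ≤ c i j)
    (P C : (∀ i : Fin k, Fin (n i)) → ℝ)
    (hP : ∀ x, P x = ∑ i, p i (x i))
    (hC : ∀ x, C x = ∑ i, c i (x i))
    (Pareto : (∀ i : Fin k, Fin (n i)) → Prop)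
    (hPareto : ∀ x, Pareto x ↔
      ¬ ∃ y, P x ≤ P y ∧ C y ≤ C x ∧ (P y, C y) ≠ (P x, C x))
    (F1 F2 Fbar1 : ℝ)
    (hF2 : IsGreatest (Set.range fun x => -(C x)) F2)
    (xbar2 : ∀ i : Fin k, Fin (n i))
    (hxbar2C : -(C xbar2) = F2)
    (hxbar2P : ∀ x, -(C x) = F2 → P x ≤ P xbar2)
    (hFbar1 : Fbar1 = P xbar2)
    (hF1 : IsGreatest (Set.range P) F1)
    (hF1gt : Fbar1 < F1)
    (d : ℝ) (hd : 0 < d)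
    (hdecr : ∀ x, -(C x) < F2 → -(C x) ≤ F2 - d)
    (eps2 : ℝ) (heps2 : eps2 = d / (F1 - Fbar1)) :
    0 < eps2 ∧
      (∀ x, -(C x) + eps2 * P x ≤ -(C xbar2) + eps2 * P xbar2) ∧
      Pareto xbar2 ∧ (∀ x, C xbar2 ≤ C x) := by
  have hsub : 0 < F1 - Fbar1 := sub_pos.mpr hF1gt
  have heps_pos : 0 < eps2 := by rw [heps2]; positivity
  have heq : eps2 * (F1 - Fbar1) = d := by
    rw [heps2]; field_simp
  have hCle : ∀ x, -(C x) ≤ F2 := fun x => hF2.2 ⟨x, rfl⟩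
  have hPle : ∀ x, P x ≤ F1 := fun x => hF1.2 ⟨x, rfl⟩
  have hmax : ∀ x, -(C x) + eps2 * P x ≤ -(C xbar2) + eps2 * P xbar2 := by
    intro x
    rcases eq_or_lt_of_le (hCle x) with h | h
    · have := hxbar2P x h
      rw [hxbar2C, ← h]
      nlinarith
    · have h1 := hdecr x h
      have h2 := hPle x
      rw [hxbar2C, ← hFbar1]
      nlinarith
  refine ⟨heps_pos, hmax, ?_, ?_⟩
  · rw [hPareto]
    rintro ⟨y, hPy, hCy, hne⟩
    have h1 : -(C xbar2) ≤ -(C y) := by linarith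
    have h2 : -(C y) = F2 := le_antisymm (hCle y) (hxbar2C ▸ h1)
    have h3 : C y = C xbar2 := by rw [← hxbar2C] at h2; linarith
    have h4 : P y = P xbar2 := le_antisymm (hxbar2P y h2) hPy
    exact hne (by rw [h3, h4])
  · intro x
    have := hCle x
    linarith [hxbar2C]
end
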